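/- arXiv:2005.06886 — 2 statements merged into one kernel-verified Lean document; each statement's English description precedes it below -/
import Mathlib

section
/- Let (n₁,n₂,n₃,z₁,z₂,z₃) be random variables with the pairs (n_j,z_j) mutually independent, Pr{n_j = 0, z_j = 1} ≤ t for each j, and Pr{n₁+n₂+n₃ ≥ 3} ≤ q₃. Then Pr{z₁ = z₂ = z₃ = 1} ≤ q₃ + t³ + 6t² + 3t. -/
/-!
Union bound: if all three `z j` fire, then either the block carries at least three photons, or
some `n j` vanishes, in which case the event `{n j = 0, z j = 1}` occurs. Hence the probability
is at most `q₃ + 3t`, which is below `q₃ + t³ + 6t² + 3t` for `t ≥ 0`.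
-/

open MeasureTheory ProbabilityTheory

lemma Fintype.exists_eq_zero_of_sum_lt_card {ι : Type*} [Fintype ι] (n : ι → ℕ)
    (h : ∑ j, n j < Fintype.card ι) : ∃ j, n j = 0 := by
  by_contra! hpos
  have : Fintype.card ι ≤ ∑ j, n j := by
    simpa using
      Finset.card_nsmul_le_sum Finset.univ n 1 fun j _ => Nat.one_le_iff_ne_zero.2 (hpos j)
  omega

lemma setOf_forall_subset_union_iUnion {Ω ι : Type*} [Fintype ι] (n : ι → Ω → ℕ)
    (p : ι → Ω → Prop) :
    {ω | ∀ j, p j ω} ⊆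
      {ω | Fintype.card ι ≤ ∑ j, n j ω} ∪ ⋃ j, {ω | n j ω = 0 ∧ p j ω} := by
  intro ω hp
  by_cases hsum : Fintype.card ι ≤ ∑ j, n j ω
  · exact Or.inl hsum
  · obtain ⟨j, hj⟩ := Fintype.exists_eq_zero_of_sum_lt_card (n · ω) (not_le.1 hsum)
    exact Or.inr (Set.mem_iUnion.2 ⟨j, hj, hp j⟩)

lemma measureReal_setOf_forall_le {Ω ι : Type*} [MeasurableSpace Ω] [Fintype ι]
    (μ : Measure Ω) [IsFiniteMeasure μ] (n : ι → Ω → ℕ) (p : ι → Ω → Prop) :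
    μ.real {ω | ∀ j, p j ω} ≤
      μ.real {ω | Fintype.card ι ≤ ∑ j, n j ω} + ∑ j, μ.real {ω | n j ω = 0 ∧ p j ω} :=
  calc μ.real {ω | ∀ j, p j ω}
      ≤ μ.real ({ω | Fintype.card ι ≤ ∑ j, n j ω} ∪ ⋃ j, {ω | n j ω = 0 ∧ p j ω}) :=
        measureReal_mono (setOf_forall_subset_union_iUnion n p)
    _ ≤ _ := (measureReal_union_le _ _).trans (by gcongr; exact measureReal_iUnion_fintype_le _)

theorem stmt5_general {Ω : Type*} [MeasurableSpace Ω] (P : Measure Ω) [IsProbabilityMeasure P]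
    (n : Fin 3 → Ω → ℕ) (z : Fin 3 → Ω → Bool)
    (t : ℝ) (ht : 0 ≤ t)
    (hbound : ∀ j, (P {ω | n j ω = 0 ∧ z j ω = true}).toReal ≤ t)
    (q3 : ℝ)
    (htail : (P {ω | 3 ≤ n 0 ω + n 1 ω + n 2 ω}).toReal ≤ q3) :
    (P {ω | z 0 ω = true ∧ z 1 ω = true ∧ z 2 ω = true}).toReal
      ≤ q3 + t ^ 3 + 6 * t ^ 2 + 3 * t := by
  have hunion := measureReal_setOf_forall_le P n (fun j ω => z j ω = true)
  simp only [Fin.forall_fin_succ, IsEmpty.forall_iff, and_true, Fin.succ_zero_eq_one,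
    Fin.succ_one_eq_two, Fin.sum_univ_three, Fintype.card_fin, measureReal_def] at hunion
  have hpoly : 0 ≤ t ^ 3 + 6 * t ^ 2 := by positivity
  linarith [hbound 0, hbound 1, hbound 2]

/-- Pr{z₁ = z₂ = z₃ = 1} ≤ q₃ + t³ + 6t² + 3t. -/
theorem stmt5 {Ω : Type*} [MeasurableSpace Ω] (P : Measure Ω) [IsProbabilityMeasure P]
    (n : Fin 3 → Ω → ℕ) (z : Fin 3 → Ω → Bool)
    (hmn : ∀ j, Measurable (n j)) (hmz : ∀ j, Measurable (z j))
    (hindep : iIndepFun (fun j ω => (n j ω, z j ω)) P)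
    (t : ℝ) (ht : 0 ≤ t)
    (hbound : ∀ j, (P {ω | n j ω = 0 ∧ z j ω = true}).toReal ≤ t)
    (q3 : ℝ) (hq3 : 0 ≤ q3)
    (htail : (P {ω | 3 ≤ n 0 ω + n 1 ω + n 2 ω}).toReal ≤ q3) :
    (P {ω | z 0 ω = true ∧ z 1 ω = true ∧ z 2 ω = true}).toReal
      ≤ q3 + t ^ 3 + 6 * t ^ 2 + 3 * t :=
  stmt5_general P n z t ht hbound q3 htail
end

section
/- Let (n₁,n₂,n₃,z₁,z₂,z₃) be random variables with the pairs (n_j,z_j) mutually independent, Pr{n_j = 0, z_j = 1} ≤ t for each j, and Pr{n₁+n₂+n₃ ≥ 2} ≤ q₂. Then Pr{z₁+z₂+z₃ ≥ 2} ≤ q₂ + t³ + 9t² + 6t. -/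
open MeasureTheory ProbabilityTheory

/-!
If at least two `z j` are set while `n 0 + n 1 + n 2 ≤ 1`, then one of those `j` has `n j = 0`.
So the event is covered by `{2 ≤ ∑ n}` together with the three events `{n j = 0, z j}`, and the
union bound already gives `q₂ + 3t ≤ q₂ + t³ + 9t² + 6t`.
-/

open Finset in
lemma exists_eq_zero_of_sum_lt_card_filter {ι : Type*} [Fintype ι] (n : ι → ℕ) (z : ι → Bool)
    (h : ∑ j, n j < #{j | z j}) : ∃ j, n j = 0 ∧ z j = true := by
  have hlt : ∑ j ∈ {j | z j}, n j < ∑ j ∈ {j | z j}, 1 :=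
    (sum_le_sum_of_subset (subset_univ _)).trans_lt (by simpa using h)
  obtain ⟨j, hj, hnj⟩ := exists_lt_of_sum_lt hlt
  exact ⟨j, Nat.lt_one_iff.mp hnj, (mem_filter.mp hj).2⟩

open Finset in
lemma measureReal_le_card_filter_le_add_sum {Ω ι : Type*} [MeasurableSpace Ω] [Fintype ι]
    (P : Measure Ω) [IsFiniteMeasure P] (n : ι → Ω → ℕ) (z : ι → Ω → Bool) (k : ℕ) :
    P.real {ω | k ≤ #{j | z j ω}}
      ≤ P.real {ω | k ≤ ∑ j, n j ω} + ∑ j, P.real {ω | n j ω = 0 ∧ z j ω = true} := by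
  have hsub : {ω | k ≤ #{j | z j ω}}
      ⊆ {ω | k ≤ ∑ j, n j ω} ∪ ⋃ j, {ω | n j ω = 0 ∧ z j ω = true} := by
    intro ω hk
    by_cases hsum : k ≤ ∑ j, n j ω
    · exact Or.inl hsum
    · obtain ⟨j, hj⟩ :=
        exists_eq_zero_of_sum_lt_card_filter (n · ω) (z · ω) ((not_le.mp hsum).trans_le hk)
      exact Or.inr (Set.mem_iUnion.mpr ⟨j, hj⟩)
  calc P.real {ω | k ≤ #{j | z j ω}}
      ≤ P.real ({ω | k ≤ ∑ j, n j ω} ∪ ⋃ j, {ω | n j ω = 0 ∧ z j ω = true}) :=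
        measureReal_mono hsub
    _ ≤ _ := (measureReal_union_le _ _).trans (by gcongr; exact measureReal_iUnion_fintype_le _)

theorem stmt7_general {Ω : Type*} [MeasurableSpace Ω] (P : Measure Ω) [IsProbabilityMeasure P]
    (n : Fin 3 → Ω → ℕ) (z : Fin 3 → Ω → Bool)
    (t : ℝ) (ht : 0 ≤ t)
    (hbound : ∀ j, (P {ω | n j ω = 0 ∧ z j ω = true}).toReal ≤ t)
    (q2 : ℝ)
    (htail : (P {ω | 2 ≤ n 0 ω + n 1 ω + n 2 ω}).toReal ≤ q2) :
    (P {ω | 2 ≤ (if z 0 ω then 1 else 0) + (if z 1 ω then 1 else 0) + (if z 2 ω then 1 else 0)}).toReal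
      ≤ q2 + t ^ 3 + 9 * t ^ 2 + 6 * t := by
  have hunion := measureReal_le_card_filter_le_add_sum P n z 2
  simp only [Finset.card_filter, Fin.sum_univ_three, measureReal_def] at hunion
  refine hunion.trans ?_
  have hpoly : 0 ≤ t ^ 3 + 9 * t ^ 2 + 3 * t := by positivity
  linarith [hbound 0, hbound 1, hbound 2]

/-- Pr{z₁+z₂+z₃ ≥ 2} ≤ q₂ + t³ + 9t² + 6t. -/
theorem stmt7 {Ω : Type*} [MeasurableSpace Ω] (P : Measure Ω) [IsProbabilityMeasure P]
    (n : Fin 3 → Ω → ℕ) (z : Fin 3 → Ω → Bool)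
    (hmn : ∀ j, Measurable (n j)) (hmz : ∀ j, Measurable (z j))
    (hindep : iIndepFun (fun j ω => (n j ω, z j ω)) P)
    (t : ℝ) (ht : 0 ≤ t)
    (hbound : ∀ j, (P {ω | n j ω = 0 ∧ z j ω = true}).toReal ≤ t)
    (q2 : ℝ) (hq2 : 0 ≤ q2)
    (htail : (P {ω | 2 ≤ n 0 ω + n 1 ω + n 2 ω}).toReal ≤ q2) :
    (P {ω | 2 ≤ (if z 0 ω then 1 else 0) + (if z 1 ω then 1 else 0) + (if z 2 ω then 1 else 0)}).toReal
      ≤ q2 + t ^ 3 + 9 * t ^ 2 + 6 * t :=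
  stmt7_general P n z t ht hbound q2 htail
end
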